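/- Let κ : ℝ² → ℝ be smooth and let E : ℝ² → M₂(ℝ) be a smooth map with det E = 1 everywhere satisfying ∂ₛE = E·𝒦₀ and ∂ₜE = E·𝒫₀, where 𝒦₀ = [[0, κ],[1, 0]] and 𝒫₀ = [[−∂ₛκ, −∂ₛ²κ + 2κ²],[2κ, ∂ₛκ]] (the extended frame with spectral parameter λ = 0). Let η(s,t) ∈ ℝ² be the first column of E(s,t). Then for every fixed t the curve s ↦ η(s,t) is star-shaped and parameterized by central affine arc length with central affine curvature κ, i.e. det(η, ∂ₛη) = 1 and −det(∂ₛη, ∂ₛ²η) = κ, and η evolves by the Pinkall flow: ∂ₜη = −(∂ₛκ)·η + 2κ·∂ₛη. -/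

import Mathlib

noncomputable section

open Matrix

attribute [local instance] Matrix.normedAddCommGroup Matrix.normedSpace

/-- The space of 2×2 real matrices. -/
abbrev M2 : Type := Matrix (Fin 2) (Fin 2) ℝ

/-- Partial derivative with respect to the first variable `s` of a real-valued function. -/
def pdS (f : ℝ → ℝ → ℝ) (s t : ℝ) : ℝ := deriv (fun x => f x t) s
/-- Partial derivative with respect to `s` of a matrix-valued function. -/
def pdSM (f : ℝ → ℝ → M2) (s t : ℝ) : M2 := deriv (fun x => f x t) s
/-- Partial derivative with respect to `t` of a matrix-valued function. -/
def pdTM (f : ℝ → ℝ → M2) (s t : ℝ) : M2 := deriv (fun y => f s y) t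
/-- Partial derivative with respect to `s` of an `ℝ²`-valued function. -/
def pdSV (f : ℝ → ℝ → ℝ × ℝ) (s t : ℝ) : ℝ × ℝ := deriv (fun x => f x t) s
/-- Partial derivative with respect to `t` of an `ℝ²`-valued function. -/
def pdTV (f : ℝ → ℝ → ℝ × ℝ) (s t : ℝ) : ℝ × ℝ := deriv (fun y => f s y) t

/-- `det2 u v` is the determinant of the 2×2 matrix with columns `u` and `v`. -/
def det2 (u v : ℝ × ℝ) : ℝ := u.1 * v.2 - u.2 * v.1

/-- The matrix `𝒦₀ = [[0, κ],[1, 0]]`. -/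
def K0 (κ : ℝ → ℝ → ℝ) (s t : ℝ) : M2 := !![0, κ s t; 1, 0]

/-- The matrix `𝒫₀ = [[−∂ₛκ, −∂ₛ²κ + 2κ²],[2κ, ∂ₛκ]]`. -/
def P0 (κ : ℝ → ℝ → ℝ) (s t : ℝ) : M2 :=
  !![-(pdS κ s t), -(pdS (pdS κ) s t) + 2 * (κ s t) ^ 2; 2 * κ s t, pdS κ s t]

/-- The first column of a matrix-valued map, as an `ℝ²`-valued map. -/
def col1 (E : ℝ → ℝ → M2) (s t : ℝ) : ℝ × ℝ := (E s t 0 0, E s t 1 0)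

/-- If `E` is an extended frame with spectral parameter `0` for a smooth
function `κ` (i.e. `det E = 1`, `∂ₛE = E·𝒦₀`, `∂ₜE = E·𝒫₀`), then the first column `η`
of `E` is, for each `t`, a star-shaped curve parameterized by central affine arc length
with central affine curvature `κ` (`det(η,∂ₛη) = 1`, `−det(∂ₛη,∂ₛ²η) = κ`), and it
evolves by the Pinkall flow `∂ₜη = −(∂ₛκ)·η + 2κ·∂ₛη`. -/
theorem stmt11 (κ : ℝ → ℝ → ℝ) (hκ : ContDiff ℝ (⊤ : ℕ∞) (fun p : ℝ × ℝ => κ p.1 p.2))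
    (E : ℝ → ℝ → M2) (hE : ContDiff ℝ (⊤ : ℕ∞) (fun p : ℝ × ℝ => E p.1 p.2))
    (hdet : ∀ s t : ℝ, (E s t).det = 1)
    (hs : ∀ s t : ℝ, pdSM E s t = E s t * K0 κ s t)
    (ht : ∀ s t : ℝ, pdTM E s t = E s t * P0 κ s t) :
    ∀ s t : ℝ,
      det2 (col1 E s t) (pdSV (col1 E) s t) = 1 ∧
      -det2 (pdSV (col1 E) s t) (pdSV (pdSV (col1 E)) s t) = κ s t ∧
      pdTV (col1 E) s t = (-(pdS κ s t)) • col1 E s t + (2 * κ s t) • pdSV (col1 E) s t := by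
  intro s t
  -- differentiability facts
  have hEs : ∀ t : ℝ, ContDiff ℝ (⊤ : ℕ∞) (fun x : ℝ => E x t) := fun t =>
    hE.comp (contDiff_id.prodMk contDiff_const)
  have hEt : ∀ s : ℝ, ContDiff ℝ (⊤ : ℕ∞) (fun y : ℝ => E s y) := fun s =>
    hE.comp (contDiff_const.prodMk contDiff_id)
  have hDs : ∀ s t : ℝ, HasDerivAt (fun x : ℝ => E x t) (E s t * K0 κ s t) s := by
    intro s t
    have := ((hEs t).differentiable (by simp) s).hasDerivAt
    have h2 : HasDerivAt (fun x : ℝ => E x t) (pdSM E s t) s := this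
    rwa [hs] at h2
  have hDt : ∀ s t : ℝ, HasDerivAt (fun y : ℝ => E s y) (E s t * P0 κ s t) t := by
    intro s t
    have := ((hEt s).differentiable (by simp) t).hasDerivAt
    have h2 : HasDerivAt (fun y : ℝ => E s y) (pdTM E s t) t := this
    rwa [ht] at h2
  -- entrywise derivatives
  have hent : ∀ (s t : ℝ) (i j : Fin 2),
      HasDerivAt (fun x : ℝ => E x t i j) ((E s t * K0 κ s t) i j) s := by
    intro s t i j
    have h1 := hasDerivAt_pi.1 (hDs s t) i
    exact hasDerivAt_pi.1 h1 j
  have hentT : ∀ (s t : ℝ) (i j : Fin 2),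
      HasDerivAt (fun y : ℝ => E s y i j) ((E s t * P0 κ s t) i j) t := by
    intro s t i j
    have h1 := hasDerivAt_pi.1 (hDt s t) i
    exact hasDerivAt_pi.1 h1 j
  -- first s-derivative of col1
  have hcol : ∀ s t : ℝ, HasDerivAt (fun x : ℝ => col1 E x t)
      ((E s t * K0 κ s t) 0 0, (E s t * K0 κ s t) 1 0) s := by
    intro s t
    exact (hent s t 0 0).prodMk (hent s t 1 0)
  have hmul : ∀ s t : ℝ, (E s t * K0 κ s t) 0 0 = E s t 0 1 ∧ (E s t * K0 κ s t) 1 0 = E s t 1 1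
      ∧ (E s t * K0 κ s t) 0 1 = κ s t * E s t 0 0 ∧ (E s t * K0 κ s t) 1 1 = κ s t * E s t 1 0 := by
    intro s t
    simp [K0, Matrix.mul_apply, Fin.sum_univ_two, mul_comm]
  have hpdSV : ∀ s t : ℝ, pdSV (col1 E) s t = (E s t 0 1, E s t 1 1) := by
    intro s t
    have := (hcol s t).deriv
    rw [show pdSV (col1 E) s t = deriv (fun x : ℝ => col1 E x t) s from rfl, this,
      (hmul s t).1, (hmul s t).2.1]
  have hpdSV2 : pdSV (pdSV (col1 E)) s t = (κ s t * E s t 0 0, κ s t * E s t 1 0) := by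
    have heq : (fun x : ℝ => pdSV (col1 E) x t) = fun x : ℝ => (E x t 0 1, E x t 1 1) := by
      funext x; exact hpdSV x t
    have hd : HasDerivAt (fun x : ℝ => (E x t 0 1, E x t 1 1))
        ((E s t * K0 κ s t) 0 1, (E s t * K0 κ s t) 1 1) s :=
      (hent s t 0 1).prodMk (hent s t 1 1)
    rw [show pdSV (pdSV (col1 E)) s t = deriv (fun x : ℝ => pdSV (col1 E) x t) s from rfl,
      heq, hd.deriv, (hmul s t).2.2.1, (hmul s t).2.2.2]
  have hdet' : E s t 0 0 * E s t 1 1 - E s t 0 1 * E s t 1 0 = 1 := by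
    have := hdet s t
    rwa [Matrix.det_fin_two] at this
  refine ⟨?_, ?_, ?_⟩
  · rw [hpdSV]
    simp only [det2, col1]
    linarith
  · rw [hpdSV, hpdSV2]
    simp only [det2]
    linear_combination (κ s t) * hdet'
  · -- t-derivative
    have hcolT : HasDerivAt (fun y : ℝ => col1 E s y)
        ((E s t * P0 κ s t) 0 0, (E s t * P0 κ s t) 1 0) t :=
      (hentT s t 0 0).prodMk (hentT s t 1 0)
    have hmulT : (E s t * P0 κ s t) 0 0 = -(pdS κ s t) * E s t 0 0 + 2 * κ s t * E s t 0 1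
        ∧ (E s t * P0 κ s t) 1 0 = -(pdS κ s t) * E s t 1 0 + 2 * κ s t * E s t 1 1 := by
      constructor <;> simp [P0, Matrix.mul_apply, Fin.sum_univ_two] <;> try ring
    rw [show pdTV (col1 E) s t = deriv (fun y : ℝ => col1 E s y) t from rfl, hcolT.deriv,
      hpdSV, hmulT.1, hmulT.2]
    simp only [col1, Prod.smul_mk, Prod.mk_add_mk, smul_eq_mul, Prod.mk.injEq]
    try constructor <;> ring
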